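/- arXiv:1012.3826 — 4 statements merged into one kernel-verified Lean document; each statement's English description precedes it below -/
import Mathlib

section
/- For each i with 1 ≤ i ≤ n, the function Φ is partially differentiable in x_{1i} and x_{2i} at every point x with all coordinates positive, and x_{1i}·∂Φ/∂x_{1i}(x) + x_{2i}·∂Φ/∂x_{2i}(x) = α_i·Φ(x); that is, Φ is annihilated by the Euler operator θ_{1i} + θ_{2i} − α_i, where θ_{ij} = x_{ij}∂/∂x_{ij}. -/
open Complex Function

/-- Partial derivative of `f` with respect to the coordinate `p`. -/
noncomputable def pd {n : ℕ} (p : Fin 2 × Fin n)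
    (f : ((Fin 2 × Fin n) → ℝ) → ℂ) (x : (Fin 2 × Fin n) → ℝ) : ℂ :=
  deriv (fun s : ℝ => f (Function.update x p s)) (x p)

/-- `Φ(x) = ∫_a^b t^γ ∏ₖ (x_{1k} + x_{2k} t)^{α_k} dt`; the first row of `x` is
indexed by `0 : Fin 2`, the second row by `1 : Fin 2`. -/
noncomputable def Phi {n : ℕ} (α : Fin n → ℂ) (γ : ℂ) (a b : ℝ)
    (x : (Fin 2 × Fin n) → ℝ) : ℂ :=
  ∫ t in a..b, (t : ℂ) ^ γ * ∏ k, ((x (0, k) : ℂ) + (x (1, k) : ℂ) * (t : ℂ)) ^ (α k)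

/-!
Freeze every column of `x` except the `i`-th. Then the integrand of `Φ` is `P(t) Z^{α_i}` with
`Z = x_{1i} + x_{2i} t` and `P` continuous on `[a, b]`. The derivatives of this integrand in
`x_{1i}` and `x_{2i}` are `α_i P Z^{α_i - 1}` times `1` and times `t`. On a compact neighbourhood
they are jointly continuous and therefore bounded, so we may differentiate under the integral
sign. The Euler operator then multiplies `α_i P Z^{α_i - 1}` by `x_{1i} + x_{2i} t = Z`, and this
gives back `α_i` times the integrand.
-/

open MeasureTheory Metric Set

theorem intervalIntegral.hasDerivAt_integral_of_continuousOn_deriv {𝕜 E : Type*} [RCLike 𝕜]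
    [NormedAddCommGroup E] [NormedSpace ℝ E] [NormedSpace 𝕜 E] {F F' : 𝕜 → ℝ → E}
    {a b : ℝ} {x₀ : 𝕜} {ε : ℝ} (hε : 0 < ε)
    (hF : ∀ s ∈ ball x₀ ε, ContinuousOn (F s) (uIcc a b))
    (hF' : ContinuousOn (uncurry F') (closedBall x₀ ε ×ˢ uIcc a b))
    (h_diff : ∀ t ∈ uIcc a b, ∀ s ∈ ball x₀ ε, HasDerivAt (F · t) (F' s t) s) :
    HasDerivAt (fun s => ∫ t in a..b, F s t) (∫ t in a..b, F' x₀ t) x₀ := by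
  obtain ⟨C, hC⟩ :=
    ((isCompact_closedBall x₀ ε).prod isCompact_uIcc).exists_bound_of_continuousOn hF'
  have hx₀ : x₀ ∈ ball x₀ ε := mem_ball_self hε
  refine (hasDerivAt_integral_of_dominated_loc_of_deriv_le (bound := fun _ => C)
    (ball_mem_nhds x₀ hε) ?_ (hF x₀ hx₀).intervalIntegrable ?_ ?_ intervalIntegrable_const ?_).2
  · filter_upwards [ball_mem_nhds x₀ hε] with s hs
    exact ((hF s hs).mono uIoc_subset_uIcc).aestronglyMeasurable measurableSet_uIoc
  · have : ContinuousOn (F' x₀) (uIcc a b) :=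
      hF'.comp (Continuous.prodMk_right x₀).continuousOn
        fun t ht => ⟨mem_closedBall_self hε.le, ht⟩
    exact (this.mono uIoc_subset_uIcc).aestronglyMeasurable measurableSet_uIoc
  · exact .of_forall fun t ht s hs => hC (s, t) ⟨ball_subset_closedBall hs, uIoc_subset_uIcc ht⟩
  · exact .of_forall fun t ht => h_diff t (uIoc_subset_uIcc ht)

theorem hasDerivAt_intervalIntegral_mul_cpow_affine {a b x₀ ε : ℝ} {P : ℝ → ℂ} {c d : ℝ → ℝ}
    (β : ℂ) (hε : 0 < ε) (hP : ContinuousOn P (uIcc a b)) (hc : ContinuousOn c (uIcc a b))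
    (hd : ContinuousOn d (uIcc a b))
    (hpos : ∀ t ∈ uIcc a b, ∀ s ∈ closedBall x₀ ε, 0 < c t + s * d t) :
    HasDerivAt (fun s : ℝ => ∫ t in a..b, P t * ((c t : ℂ) + s * d t) ^ β)
      (∫ t in a..b, P t * (β * ((c t : ℂ) + x₀ * d t) ^ (β - 1)) * d t) x₀ := by
  have hslit : ∀ t ∈ uIcc a b, ∀ s ∈ closedBall x₀ ε, (c t : ℂ) + s * d t ∈ slitPlane :=
    fun t ht s hs => by simpa using ofReal_mem_slitPlane.2 (hpos t ht s hs)
  refine intervalIntegral.hasDerivAt_integral_of_continuousOn_deriv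
    (F := fun (s : ℝ) t => P t * ((c t : ℂ) + s * d t) ^ β)
    (F' := fun (s : ℝ) t => P t * (β * ((c t : ℂ) + s * d t) ^ (β - 1)) * d t) hε
    (fun s hs => hP.mul ?_) ?_ fun t ht s hs => ?_
  · exact ContinuousOn.cpow_const (by fun_prop)
      fun t ht => hslit t ht s (ball_subset_closedBall hs)
  · have hsnd : MapsTo Prod.snd (closedBall x₀ ε ×ˢ uIcc a b) (uIcc a b) := fun _ hq => hq.2
    have hc' := continuous_ofReal.comp_continuousOn (hc.comp continuousOn_snd hsnd)
    have hd' := continuous_ofReal.comp_continuousOn (hd.comp continuousOn_snd hsnd)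
    have hline := hc'.add ((continuous_ofReal.comp continuous_fst).continuousOn.mul hd')
    exact ((hP.comp continuousOn_snd hsnd).mul
      (continuousOn_const.mul (hline.cpow_const fun q hq => hslit q.2 hq.2 q.1 hq.1))).mul hd'
  · have hline : HasDerivAt (fun s : ℝ => (c t : ℂ) + s * d t) (d t) s := by
      simpa using (ofRealCLM.hasDerivAt.mul_const (d t : ℂ)).const_add (c t : ℂ)
    simpa [mul_assoc] using
      (((hasStrictDerivAt_cpow_const (hslit t ht s (ball_subset_closedBall hs))).hasDerivAt.comp
        s hline).const_mul (P t))

theorem cpow_sub_one_mul_self {z : ℂ} (hz : z ≠ 0) (β : ℂ) : z ^ (β - 1) * z = z ^ β := by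
  rw [cpow_sub _ _ hz, cpow_one, div_mul_cancel₀ _ hz]

theorem ofReal_add_ofReal_mul_mem_slitPlane {u v t : ℝ} (hu : 0 < u) (hv : 0 ≤ v) (ht : 0 ≤ t) :
    (u : ℂ) + v * t ∈ slitPlane := by
  exact_mod_cast ofReal_mem_slitPlane.2 (by positivity : 0 < u + v * t)

noncomputable def phiCofactor {n : ℕ} (α : Fin n → ℂ) (γ : ℂ) (x : (Fin 2 × Fin n) → ℝ)
    (i : Fin n) (t : ℝ) : ℂ :=
  (t : ℂ) ^ γ * ∏ k ∈ Finset.univ.erase i, ((x (0, k) : ℂ) + (x (1, k) : ℂ) * (t : ℂ)) ^ (α k)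

/-- The `x_{1i}`-derivative of the integrand of `Phi`; its `x_{2i}`-derivative is this times `t`. -/
noncomputable def phiIntegrandDeriv {n : ℕ} (α : Fin n → ℂ) (γ : ℂ) (x : (Fin 2 × Fin n) → ℝ)
    (i : Fin n) (t : ℝ) : ℂ :=
  phiCofactor α γ x i t * (α i * ((x (0, i) : ℂ) + x (1, i) * t) ^ (α i - 1))

section

variable {n : ℕ} (α : Fin n → ℂ) (γ : ℂ) (a b : ℝ) (x : (Fin 2 × Fin n) → ℝ) (i : Fin n)

theorem Phi_update_eq (j : Fin 2) (s : ℝ) :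
    Phi α γ a b (update x (j, i) s) = ∫ t in a..b, phiCofactor α γ x i t *
      ((update x (j, i) s (0, i) : ℂ) + update x (j, i) s (1, i) * t) ^ α i := by
  refine intervalIntegral.integral_congr fun t _ => ?_
  have hcol : ∀ k ∈ Finset.univ.erase i, ∀ l : Fin 2, update x (j, i) s (l, k) = x (l, k) :=
    fun k hk l => update_of_ne (by simp [(Finset.mem_erase.1 hk).1]) _ _
  simp only [phiCofactor, ← Finset.mul_prod_erase Finset.univ _ (Finset.mem_univ i)]
  rw [Finset.prod_congr rfl fun k hk => by rw [hcol k hk 0, hcol k hk 1]]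
  ring

theorem Phi_eq : Phi α γ a b x = ∫ t in a..b, phiCofactor α γ x i t *
    ((x (0, i) : ℂ) + x (1, i) * t) ^ α i := by
  simpa using Phi_update_eq α γ a b x i 0 (x (0, i))

variable {a b x} (hI : ∀ t ∈ uIcc a b, 0 < t) (hx : ∀ p, 0 < x p)
include hI hx

theorem continuousOn_phiCofactor : ContinuousOn (phiCofactor α γ x i) (uIcc a b) :=
  (continuous_ofReal.continuousOn.cpow_const fun t ht => ofReal_mem_slitPlane.2 (hI t ht)).mul
    (continuousOn_finsetProd _ fun k _ => ContinuousOn.cpow_const (by fun_prop) fun t ht =>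
      ofReal_add_ofReal_mul_mem_slitPlane (hx (0, k)) (hx (1, k)).le (hI t ht).le)

theorem continuousOn_phiIntegrandDeriv : ContinuousOn (phiIntegrandDeriv α γ x i) (uIcc a b) :=
  (continuousOn_phiCofactor α γ i hI hx).mul (continuousOn_const.mul
    (ContinuousOn.cpow_const (by fun_prop) fun t ht =>
      ofReal_add_ofReal_mul_mem_slitPlane (hx (0, i)) (hx (1, i)).le (hI t ht).le))

theorem hasDerivAt_Phi_update_zero :
    HasDerivAt (fun s : ℝ => Phi α γ a b (update x (0, i) s))
      (∫ t in a..b, phiIntegrandDeriv α γ x i t) (x (0, i)) := by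
  have hpos : ∀ t ∈ uIcc a b, ∀ s ∈ closedBall (x (0, i)) (x (0, i) / 2),
      0 < x (1, i) * t + s * 1 :=
    fun t ht s hs => by
      have := (Real.closedBall_eq_Icc ▸ hs).1
      nlinarith [hI t ht, hx (0, i), hx (1, i)]
  convert hasDerivAt_intervalIntegral_mul_cpow_affine (α i) (half_pos (hx (0, i)))
    (continuousOn_phiCofactor α γ i hI hx) (by fun_prop) continuousOn_const hpos using 1
  · funext s
    rw [Phi_update_eq]
    refine intervalIntegral.integral_congr fun t _ => ?_
    simp only [update_self, update_of_ne (show ((1 : Fin 2), i) ≠ (0, i) by simp)]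
    congr 2
    push_cast
    ring
  · refine intervalIntegral.integral_congr fun t _ => ?_
    simp only [phiIntegrandDeriv, ofReal_one, mul_one]
    congr 3
    push_cast
    ring

theorem hasDerivAt_Phi_update_one :
    HasDerivAt (fun s : ℝ => Phi α γ a b (update x (1, i) s))
      (∫ t in a..b, phiIntegrandDeriv α γ x i t * t) (x (1, i)) := by
  have hpos : ∀ t ∈ uIcc a b, ∀ s ∈ closedBall (x (1, i)) (x (1, i) / 2),
      0 < x (0, i) + s * t :=
    fun t ht s hs => by
      have := (Real.closedBall_eq_Icc ▸ hs).1
      nlinarith [hI t ht, hx (0, i), hx (1, i)]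
  convert hasDerivAt_intervalIntegral_mul_cpow_affine (d := fun t => t) (α i)
    (half_pos (hx (1, i))) (continuousOn_phiCofactor α γ i hI hx) continuousOn_const
    (continuousOn_id' _) hpos using 1
  · funext s
    rw [Phi_update_eq]
    simp only [update_self, update_of_ne (show ((0 : Fin 2), i) ≠ (1, i) by simp)]
  · rfl

theorem euler_operator_Phi_eq :
    (x (0, i) : ℂ) * (∫ t in a..b, phiIntegrandDeriv α γ x i t)
      + (x (1, i) : ℂ) * (∫ t in a..b, phiIntegrandDeriv α γ x i t * t) = α i * Phi α γ a b x := by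
  have hD := continuousOn_phiIntegrandDeriv α γ i hI hx
  have hDt : IntervalIntegrable (fun t : ℝ => phiIntegrandDeriv α γ x i t * t) volume a b :=
    (hD.mul continuous_ofReal.continuousOn).intervalIntegrable
  rw [Phi_eq α γ a b x i, ← intervalIntegral.integral_const_mul,
    ← intervalIntegral.integral_const_mul, ← intervalIntegral.integral_const_mul,
    ← intervalIntegral.integral_add (hD.intervalIntegrable.const_mul _) (hDt.const_mul _)]
  refine intervalIntegral.integral_congr fun t ht => ?_
  have hZ := slitPlane_ne_zero <|
    ofReal_add_ofReal_mul_mem_slitPlane (hx (0, i)) (hx (1, i)).le (hI t ht).le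
  simp only [phiIntegrandDeriv]
  linear_combination (α i * phiCofactor α γ x i t) * cpow_sub_one_mul_self hZ (α i)

end

theorem stmt3_general {n : ℕ} (α : Fin n → ℂ) (γ : ℂ) (a b : ℝ)
    (ha : 0 < a) (hab : a < b)
    (i : Fin n) (x : (Fin 2 × Fin n) → ℝ) (hx : ∀ p, 0 < x p) :
    DifferentiableAt ℝ
        (fun s : ℝ => Phi α γ a b (Function.update x (0, i) s)) (x (0, i))
    ∧ DifferentiableAt ℝ
        (fun s : ℝ => Phi α γ a b (Function.update x (1, i) s)) (x (1, i))
    ∧ (x (0, i) : ℂ) * pd (0, i) (Phi α γ a b) x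
        + (x (1, i) : ℂ) * pd (1, i) (Phi α γ a b) x
        = α i * Phi α γ a b x := by
  have hI : ∀ t ∈ uIcc a b, 0 < t := fun t ht => ha.trans_le (uIcc_of_le hab.le ▸ ht).1
  have hd₀ := hasDerivAt_Phi_update_zero α γ i hI hx
  have hd₁ := hasDerivAt_Phi_update_one α γ i hI hx
  refine ⟨hd₀.differentiableAt, hd₁.differentiableAt, ?_⟩
  rw [pd, pd, hd₀.deriv, hd₁.deriv]
  exact euler_operator_Phi_eq α γ i hI hx

/-- `Φ` is partially differentiable in `x_{1i}` and `x_{2i}` and is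
annihilated by the Euler operator `θ_{1i} + θ_{2i} − α_i`. -/
theorem stmt3 {n : ℕ} (hn : 1 ≤ n) (α : Fin n → ℂ) (γ : ℂ) (a b : ℝ)
    (ha : 0 < a) (hab : a < b) (hγ : 0 < γ.re) (hα : ∀ k, 0 < (α k).re)
    (i : Fin n) (x : (Fin 2 × Fin n) → ℝ) (hx : ∀ p, 0 < x p) :
    DifferentiableAt ℝ
        (fun s : ℝ => Phi α γ a b (Function.update x (0, i) s)) (x (0, i))
    ∧ DifferentiableAt ℝ
        (fun s : ℝ => Phi α γ a b (Function.update x (1, i) s)) (x (1, i))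
    ∧ (x (0, i) : ℂ) * pd (0, i) (Phi α γ a b) x
        + (x (1, i) : ℂ) * pd (1, i) (Phi α γ a b) x
        = α i * Phi α γ a b x :=
  stmt3_general α γ a b ha hab i x hx
end

section
/- For all i < j with 1 ≤ i < j ≤ n, the mixed partial derivatives of Φ exist at every point x with all coordinates positive and satisfy ∂²Φ/∂x_{1i}∂x_{2j}(x) = ∂²Φ/∂x_{1j}∂x_{2i}(x); that is, Φ is annihilated by the toric operator ∂_{1i}∂_{2j} − ∂_{1j}∂_{2i}. -/
/-!
Differentiating under the integral sign, `∂/∂x_{1m}` and `∂/∂x_{2m}` map `Φ` with exponents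
`(β, δ)` to `β_m` times the same kind of integral with `β_m` lowered by one and, for the second
row, `δ` raised by one (the factor `x_{1m} + x_{2m} t` has derivative `t` in `x_{2m}`).
Hence both `∂_{1i}∂_{2j}Φ` and `∂_{1j}∂_{2i}Φ` equal
`α_i α_j ∫_a^b t^{γ+1} ∏ₖ (x_{1k} + x_{2k} t)^{α'_k} dt` with `α'` equal to `α` lowered by one
at `i` and at `j`.
-/

open Complex Function

open MeasureTheory Metric Set Filter Topology Finset

lemma hasDerivAt_intervalIntegral_of_continuousOn {E : Type*} [NormedAddCommGroup E]
    [NormedSpace ℝ E] {F F' : ℝ → ℝ → E} {s₀ a b ε : ℝ} (hε : 0 < ε)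
    (hF : ∀ s ∈ ball s₀ ε, ContinuousOn (F s) (uIcc a b))
    (hF' : ContinuousOn (uncurry F') (closedBall s₀ ε ×ˢ uIcc a b))
    (hd : ∀ s ∈ ball s₀ ε, ∀ t ∈ uIcc a b, HasDerivAt (F · t) (F' s t) s) :
    HasDerivAt (fun s => ∫ t in a..b, F s t) (∫ t in a..b, F' s₀ t) s₀ := by
  have hF'₀ : ContinuousOn (F' s₀) (uIcc a b) :=
    hF'.comp (Continuous.prodMk_right s₀).continuousOn
      fun t ht => ⟨mem_closedBall_self hε.le, ht⟩
  obtain ⟨C, hC⟩ :=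
    ((isCompact_closedBall s₀ ε).prod isCompact_uIcc).exists_bound_of_continuousOn hF'
  refine (intervalIntegral.hasDerivAt_integral_of_dominated_loc_of_deriv_le
    (bound := fun _ => C) (ball_mem_nhds s₀ hε) ?_ ?_ ?_ ?_ intervalIntegrable_const ?_).2
  · filter_upwards [ball_mem_nhds s₀ hε] with s hs
    exact ((hF s hs).mono uIoc_subset_uIcc).aestronglyMeasurable measurableSet_uIoc
  · exact (hF s₀ (mem_ball_self hε)).intervalIntegrable
  · exact (hF'₀.mono uIoc_subset_uIcc).aestronglyMeasurable measurableSet_uIoc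
  · exact Eventually.of_forall fun t ht s hs =>
      hC (s, t) ⟨ball_subset_closedBall hs, uIoc_subset_uIcc ht⟩
  · exact Eventually.of_forall fun t ht s hs => hd s hs t (uIoc_subset_uIcc ht)

section Phi

variable {n : ℕ}

noncomputable def linearFactor (x : (Fin 2 × Fin n) → ℝ) (t : ℝ) (k : Fin n) : ℂ :=
  (x (0, k) : ℂ) + (x (1, k) : ℂ) * (t : ℂ)

noncomputable def phiIntegrand (δ : ℂ) (β : Fin n → ℂ) (x : (Fin 2 × Fin n) → ℝ) (t : ℝ) :
    ℂ :=
  (t : ℂ) ^ δ * ∏ k, linearFactor x t k ^ (β k)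

lemma linearFactor_mem_slitPlane {x : (Fin 2 × Fin n) → ℝ} (hx : ∀ q, 0 < x q) {t : ℝ}
    (ht : 0 < t) (k : Fin n) : linearFactor x t k ∈ slitPlane := by
  have h₀ := hx (0, k)
  have h₁ := hx (1, k)
  rw [linearFactor, ← ofReal_mul, ← ofReal_add, ofReal_mem_slitPlane]
  positivity

lemma linearFactor_update_of_ne (x : (Fin 2 × Fin n) → ℝ) (t : ℝ) {k m : Fin n} (hk : k ≠ m)
    (r : Fin 2) (s : ℝ) : linearFactor (update x (r, m) s) t k = linearFactor x t k := by
  simp only [linearFactor, update_of_ne (show ((0 : Fin 2), k) ≠ (r, m) by simp [hk]),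
    update_of_ne (show ((1 : Fin 2), k) ≠ (r, m) by simp [hk])]

lemma hasDerivAt_linearFactor_update (x : (Fin 2 × Fin n) → ℝ) (t : ℝ) (r : Fin 2)
    (m : Fin n) :
    HasDerivAt (fun s => linearFactor (update x (r, m) s) t m) ((t : ℂ) ^ (r : ℕ)) (x (r, m)) := by
  fin_cases r
  · simpa [linearFactor, update_of_ne] using
      ((hasDerivAt_id (x (0, m) : ℂ)).add_const ((x (1, m) : ℂ) * t)).comp_ofReal
  · simpa [linearFactor, update_of_ne] using
      (((hasDerivAt_id (x (1, m) : ℂ)).mul_const (t : ℂ)).const_add (x (0, m) : ℂ)).comp_ofReal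

lemma continuousAt_phiIntegrand (δ : ℂ) (β : Fin n → ℂ) {x : (Fin 2 × Fin n) → ℝ}
    (hx : ∀ q, 0 < x q) {t : ℝ} (ht : 0 < t) :
    ContinuousAt (fun q : ((Fin 2 × Fin n) → ℝ) × ℝ => phiIntegrand δ β q.1 q.2) (x, t) := by
  refine ((continuous_ofReal.comp continuous_snd).continuousAt.cpow continuousAt_const
    (ofReal_mem_slitPlane.2 ht)).mul (tendsto_finsetProd _ fun k _ => ?_)
  exact ContinuousAt.cpow (by unfold linearFactor; fun_prop) continuousAt_const
    (linearFactor_mem_slitPlane hx ht k)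

lemma hasDerivAt_phiIntegrand_update (δ : ℂ) (β : Fin n → ℂ) {x : (Fin 2 × Fin n) → ℝ}
    (hx : ∀ q, 0 < x q) (r : Fin 2) (m : Fin n) {t : ℝ} (ht : 0 < t) :
    HasDerivAt (fun s => phiIntegrand δ β (update x (r, m) s) t)
      (β m * phiIntegrand (δ + (r : ℕ)) (update β m (β m - 1)) x t) (x (r, m)) := by
  set C := (t : ℂ) ^ δ * ∏ k ∈ univ.erase m, linearFactor x t k ^ β k
  have hsplit : ∀ s, phiIntegrand δ β (update x (r, m) s) t
      = C * linearFactor (update x (r, m) s) t m ^ β m := fun s => by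
    rw [phiIntegrand, ← mul_prod_erase univ _ (mem_univ m), Finset.prod_congr rfl
      fun k hk => by rw [linearFactor_update_of_ne x t (ne_of_mem_erase hk)]]
    ring
  have hpow : HasDerivAt (fun s => linearFactor (update x (r, m) s) t m ^ β m)
      (β m * linearFactor x t m ^ (β m - 1) * (t : ℂ) ^ (r : ℕ)) (x (r, m)) := by
    have hcpow := hasStrictDerivAt_cpow_const (c := β m) (linearFactor_mem_slitPlane hx ht m)
    rw [← update_eq_self (r, m) x] at hcpow
    have hcomp := hcpow.hasDerivAt.comp (h := fun s => linearFactor (update x (r, m) s) t m) _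
      (hasDerivAt_linearFactor_update x t r m)
    rw [update_eq_self] at hcomp
    exact hcomp
  have ht₀ : (t : ℂ) ≠ 0 := ofReal_ne_zero.2 ht.ne'
  rw [funext hsplit]
  refine (hpow.const_mul C).congr_deriv ?_
  rw [phiIntegrand, ← mul_prod_erase univ _ (mem_univ m), update_self, Finset.prod_congr rfl
    fun k hk => by rw [update_of_ne (ne_of_mem_erase hk)], cpow_add _ _ ht₀, cpow_natCast]
  ring

lemma update_apply_pos {x : (Fin 2 × Fin n) → ℝ} (hx : ∀ q, 0 < x q) (p : Fin 2 × Fin n) {s : ℝ}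
    (hs : 0 < s) (q : Fin 2 × Fin n) : 0 < update x p s q := by
  rcases eq_or_ne q p with rfl | h
  · rwa [update_self]
  · rw [update_of_ne h]; exact hx q

lemma hasDerivAt_Phi_update (β : Fin n → ℂ) (δ : ℂ) {a b : ℝ} (ha : 0 < a) (hb : 0 < b)
    {x : (Fin 2 × Fin n) → ℝ} (hx : ∀ q, 0 < x q) (r : Fin 2) (m : Fin n) :
    HasDerivAt (fun s => Phi β δ a b (update x (r, m) s))
      (β m * Phi (update β m (β m - 1)) (δ + (r : ℕ)) a b x) (x (r, m)) := by
  have hε : 0 < x (r, m) / 2 := half_pos (hx (r, m))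
  have hpos : ∀ s ∈ closedBall (x (r, m)) (x (r, m) / 2), ∀ q, 0 < update x (r, m) s q :=
    fun s hs => update_apply_pos hx (r, m) <| by
      rw [mem_closedBall, Real.dist_eq, abs_le] at hs
      linarith [hs.1]
  have hcont : ∀ (δ' : ℂ) (β' : Fin n → ℂ), ContinuousOn
      (uncurry fun s t => phiIntegrand δ' β' (update x (r, m) s) t)
      (closedBall (x (r, m)) (x (r, m) / 2) ×ˢ uIcc a b) := fun δ' β' q hq =>
    ((continuousAt_phiIntegrand δ' β' (hpos q.1 hq.1) ((lt_min ha hb).trans_le hq.2.1)).comp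
      (f := fun q : ℝ × ℝ => (update x (r, m) q.1, q.2)) (by fun_prop)).continuousWithinAt
  have hderiv := hasDerivAt_intervalIntegral_of_continuousOn
    (F := fun s t => phiIntegrand δ β (update x (r, m) s) t)
    (F' := fun s t =>
      β m * phiIntegrand (δ + (r : ℕ)) (update β m (β m - 1)) (update x (r, m) s) t)
    hε (fun s hs => (hcont δ β).comp (Continuous.prodMk_right s).continuousOn
      fun t ht => ⟨ball_subset_closedBall hs, ht⟩)
    (continuousOn_const.mul (hcont _ _))
    (fun s hs t ht => by
      simpa only [update_idem, update_self] using hasDerivAt_phiIntegrand_update δ β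
        (hpos s (ball_subset_closedBall hs)) r m ((lt_min ha hb).trans_le ht.1))
  rw [update_eq_self, intervalIntegral.integral_const_mul] at hderiv
  exact hderiv

lemma pd_Phi (β : Fin n → ℂ) (δ : ℂ) {a b : ℝ} (ha : 0 < a) (hb : 0 < b)
    {x : (Fin 2 × Fin n) → ℝ} (hx : ∀ q, 0 < x q) (r : Fin 2) (m : Fin n) :
    pd (r, m) (Phi β δ a b) x = β m * Phi (update β m (β m - 1)) (δ + (r : ℕ)) a b x :=
  (hasDerivAt_Phi_update β δ ha hb hx r m).deriv

lemma hasDerivAt_pd_Phi_update (β : Fin n → ℂ) (δ : ℂ) {a b : ℝ} (ha : 0 < a) (hb : 0 < b)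
    {x : (Fin 2 × Fin n) → ℝ} (hx : ∀ q, 0 < x q) (r r' : Fin 2) (m m' : Fin n) :
    HasDerivAt (fun s => pd (r, m) (Phi β δ a b) (update x (r', m') s))
      (β m * (update β m (β m - 1) m' *
        Phi (update (update β m (β m - 1)) m' (update β m (β m - 1) m' - 1))
          (δ + (r : ℕ) + (r' : ℕ)) a b x)) (x (r', m')) := by
  refine ((hasDerivAt_Phi_update _ _ ha hb hx r' m').const_mul (β m)).congr_of_eventuallyEq ?_
  filter_upwards [eventually_gt_nhds (hx (r', m'))] with s hs
  exact pd_Phi β δ ha hb (update_apply_pos hx _ hs) r m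

end Phi

theorem stmt4_general {n : ℕ} (α : Fin n → ℂ) (γ : ℂ) (a b : ℝ)
    (ha : 0 < a) (hab : a < b)
    (i j : Fin n) (hij : i < j) (x : (Fin 2 × Fin n) → ℝ) (hx : ∀ p, 0 < x p) :
    DifferentiableAt ℝ
        (fun s : ℝ => Phi α γ a b (Function.update x (1, j) s)) (x (1, j))
    ∧ DifferentiableAt ℝ
        (fun s : ℝ => pd (1, j) (Phi α γ a b) (Function.update x (0, i) s)) (x (0, i))
    ∧ DifferentiableAt ℝ
        (fun s : ℝ => Phi α γ a b (Function.update x (1, i) s)) (x (1, i))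
    ∧ DifferentiableAt ℝ
        (fun s : ℝ => pd (1, i) (Phi α γ a b) (Function.update x (0, j) s)) (x (0, j))
    ∧ pd (0, i) (pd (1, j) (Phi α γ a b)) x
        = pd (0, j) (pd (1, i) (Phi α γ a b)) x := by
  have hb : 0 < b := ha.trans hab
  have hd_ij := hasDerivAt_pd_Phi_update α γ ha hb hx 1 0 j i
  have hd_ji := hasDerivAt_pd_Phi_update α γ ha hb hx 1 0 i j
  refine ⟨(hasDerivAt_Phi_update α γ ha hb hx 1 j).differentiableAt, hd_ij.differentiableAt,
    (hasDerivAt_Phi_update α γ ha hb hx 1 i).differentiableAt, hd_ji.differentiableAt, ?_⟩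
  rw [pd, hd_ij.deriv, pd, hd_ji.deriv, update_of_ne hij.ne, update_of_ne hij.ne',
    update_comm hij.ne', mul_left_comm]

/-- the mixed partial derivatives of `Φ` exist and
`Φ` is annihilated by the toric operator `∂_{1i}∂_{2j} − ∂_{1j}∂_{2i}`. -/
theorem stmt4 {n : ℕ} (hn : 1 ≤ n) (α : Fin n → ℂ) (γ : ℂ) (a b : ℝ)
    (ha : 0 < a) (hab : a < b) (hγ : 0 < γ.re) (hα : ∀ k, 0 < (α k).re)
    (i j : Fin n) (hij : i < j) (x : (Fin 2 × Fin n) → ℝ) (hx : ∀ p, 0 < x p) :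
    DifferentiableAt ℝ
        (fun s : ℝ => Phi α γ a b (Function.update x (1, j) s)) (x (1, j))
    ∧ DifferentiableAt ℝ
        (fun s : ℝ => pd (1, j) (Phi α γ a b) (Function.update x (0, i) s)) (x (0, i))
    ∧ DifferentiableAt ℝ
        (fun s : ℝ => Phi α γ a b (Function.update x (1, i) s)) (x (1, i))
    ∧ DifferentiableAt ℝ
        (fun s : ℝ => pd (1, i) (Phi α γ a b) (Function.update x (0, j) s)) (x (0, j))
    ∧ pd (0, i) (pd (1, j) (Phi α γ a b)) x
        = pd (0, j) (pd (1, i) (Phi α γ a b)) x :=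
  stmt4_general α γ a b ha hab i j hij x hx
end

section
/- At every point x with all coordinates positive, Φ satisfies the inhomogeneous equation Σ_{i=1}^n x_{2i}·∂Φ/∂x_{2i}(x) + (γ+1)·Φ(x) = g(b,x) − g(a,x), where g(t,x) = t^{γ+1} ∏_{k=1}^n (x_{1k} + x_{2k} t)^{α_k}. Hence the integral Φ is a solution of the incomplete Δ₁×Δ_{n−1}-hypergeometric system with inhomogeneous part [g(t,x)]_{t=a}^{t=b}. -/
/-!
Every base `x_{1k} + x_{2k} t` stays in the right half-plane for `t > 0`, so the integrand is
smooth there. Differentiating it in `x_{2i}` only brings down a factor `t` from the `i`-th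
base, hence `∑ᵢ x_{2i} ∂_{x_{2i}}` of the integrand is `t^{γ+1} ∂_t ∏ₖ (x_{1k} + x_{2k} t)^{α_k}`,
and adding `(γ + 1)` times the integrand gives `∂_t g(t, x)`. Differentiation under the
integral sign is justified by continuity on a compact neighbourhood, and the fundamental
theorem of calculus finishes the proof.
-/

open Complex Function

/-- `g(t,x) = t^(γ+1) ∏ₖ (x_{1k} + x_{2k} t)^{α_k}`. -/
noncomputable def gfun {n : ℕ} (α : Fin n → ℂ) (γ : ℂ) (t : ℝ)
    (x : (Fin 2 × Fin n) → ℝ) : ℂ :=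
  (t : ℂ) ^ (γ + 1) * ∏ k, ((x (0, k) : ℂ) + (x (1, k) : ℂ) * (t : ℂ)) ^ (α k)

open Set Topology intervalIntegral

theorem HasDerivAt.cpow_const_of_real {f : ℝ → ℂ} {f' : ℂ} {u : ℝ} (w : ℂ)
    (hf : HasDerivAt f f' u) (h0 : f u ∈ slitPlane) :
    HasDerivAt (fun u => f u ^ w) (w * f u ^ (w - 1) * f') u :=
  (Complex.hasStrictDerivAt_cpow_const h0).hasDerivAt.comp u hf

theorem intervalIntegral.hasDerivAt_integral_of_continuousOn {E : Type*}
    [NormedAddCommGroup E] [NormedSpace ℝ E] {F F' : ℝ → ℝ → E} {U : Set ℝ} {s₀ a b : ℝ}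
    (hU : U ∈ 𝓝 s₀) (hF : ∀ s ∈ U, ContinuousOn (F s) (uIcc a b))
    (hF' : ContinuousOn (uncurry F') (U ×ˢ uIcc a b))
    (h_diff : ∀ s ∈ U, ∀ t ∈ uIcc a b, HasDerivAt (F · t) (F' s t) s) :
    HasDerivAt (fun s => ∫ t in a..b, F s t) (∫ t in a..b, F' s₀ t) s₀ := by
  obtain ⟨δ, hδ, hδU⟩ := Metric.nhds_basis_closedBall.mem_iff.1 hU
  have hball : Metric.ball s₀ δ ⊆ U := Metric.ball_subset_closedBall.trans hδU
  obtain ⟨C, hC⟩ := (isCompact_closedBall s₀ δ |>.prod isCompact_uIcc).exists_bound_of_continuousOn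
    (hF'.mono (prod_mono hδU le_rfl))
  have hF's₀ : ContinuousOn (F' s₀) (uIcc a b) :=
    hF'.comp (continuousOn_const.prodMk continuousOn_id) fun t ht => ⟨mem_of_mem_nhds hU, ht⟩
  refine (hasDerivAt_integral_of_dominated_loc_of_deriv_le (bound := fun _ => C)
    (Metric.ball_mem_nhds s₀ hδ) ?_ ((hF s₀ (mem_of_mem_nhds hU)).intervalIntegrable)
    ((hF's₀.mono uIoc_subset_uIcc).aestronglyMeasurable measurableSet_uIoc)
    (.of_forall fun t ht s hs => hC (s, t) ⟨Metric.ball_subset_closedBall hs, uIoc_subset_uIcc ht⟩)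
    intervalIntegrable_const
    (.of_forall fun t ht s hs => h_diff s (hball hs) t (uIoc_subset_uIcc ht))).2
  filter_upwards [hU] with s hs
  exact ((hF s hs).mono uIoc_subset_uIcc).aestronglyMeasurable measurableSet_uIoc

namespace Phi

variable {n : ℕ} (α : Fin n → ℂ) (γ : ℂ)

def base (y : (Fin 2 × Fin n) → ℝ) (k : Fin n) (t : ℝ) : ℂ :=
  (y (0, k) : ℂ) + (y (1, k) : ℂ) * (t : ℂ)

noncomputable def integrand (y : (Fin 2 × Fin n) → ℝ) (t : ℝ) : ℂ :=
  (t : ℂ) ^ γ * ∏ k, base y k t ^ α k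

noncomputable def integrandPartialDeriv (y : (Fin 2 × Fin n) → ℝ) (i : Fin n) (t : ℝ) : ℂ :=
  (t : ℂ) ^ γ * (α i * base y i t ^ (α i - 1) * t * ∏ k ∈ Finset.univ.erase i, base y k t ^ α k)

variable {α γ} {y : (Fin 2 × Fin n) → ℝ} {t : ℝ}

theorem base_mem_slitPlane (hy : ∀ p, 0 < y p) (ht : 0 ≤ t) (k : Fin n) :
    base y k t ∈ slitPlane := by
  have : base y k t = ((y (0, k) + y (1, k) * t : ℝ) : ℂ) := by push_cast; rfl
  rw [this, ofReal_mem_slitPlane]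
  have := hy (0, k); have := hy (1, k); positivity

theorem continuousAt_base_cpow (hy : ∀ p, 0 < y p) (ht : 0 ≤ t) (k : Fin n) (w : ℂ) :
    ContinuousAt (fun q : ((Fin 2 × Fin n) → ℝ) × ℝ => base q.1 k q.2 ^ w) (y, t) :=
  ContinuousAt.cpow (by unfold base; fun_prop) continuousAt_const (base_mem_slitPlane hy ht k)

theorem continuousAt_ofReal_cpow (ht : 0 < t) (w : ℂ) :
    ContinuousAt (fun q : ((Fin 2 × Fin n) → ℝ) × ℝ => (q.2 : ℂ) ^ w) (y, t) :=
  ContinuousAt.cpow (by fun_prop) continuousAt_const (ofReal_mem_slitPlane.2 ht)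

theorem continuousAt_integrand (hy : ∀ p, 0 < y p) (ht : 0 < t) :
    ContinuousAt (fun q : ((Fin 2 × Fin n) → ℝ) × ℝ => integrand α γ q.1 q.2) (y, t) :=
  (continuousAt_ofReal_cpow ht γ).mul <|
    tendsto_finsetProd _ fun k _ => continuousAt_base_cpow hy ht.le k (α k)

theorem continuousAt_integrandPartialDeriv (hy : ∀ p, 0 < y p) (ht : 0 < t) (i : Fin n) :
    ContinuousAt (fun q : ((Fin 2 × Fin n) → ℝ) × ℝ => integrandPartialDeriv α γ q.1 i q.2)
      (y, t) :=
  (continuousAt_ofReal_cpow ht γ).mul <|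
    ((continuousAt_const.mul (continuousAt_base_cpow hy ht.le i _)).mul (by fun_prop)).mul <|
    tendsto_finsetProd _ fun k _ => continuousAt_base_cpow hy ht.le k (α k)

theorem continuousOn_integrand (hy : ∀ p, 0 < y p) {s : Set ℝ} (hs : ∀ t ∈ s, 0 < t) :
    ContinuousOn (integrand α γ y) s := fun t ht =>
  ((continuousAt_integrand hy (hs t ht)).comp
    (Continuous.prodMk_right y).continuousAt).continuousWithinAt

theorem continuousOn_integrandPartialDeriv (hy : ∀ p, 0 < y p) {s : Set ℝ}
    (hs : ∀ t ∈ s, 0 < t) (i : Fin n) : ContinuousOn (integrandPartialDeriv α γ y i) s :=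
  fun t ht => ((continuousAt_integrandPartialDeriv hy (hs t ht) i).comp
    (Continuous.prodMk_right y).continuousAt).continuousWithinAt

theorem hasDerivAt_base_cpow (hy : ∀ p, 0 < y p) (ht : 0 < t) (k : Fin n) (w : ℂ) :
    HasDerivAt (fun u => base y k u ^ w) (w * base y k t ^ (w - 1) * y (1, k)) t := by
  refine HasDerivAt.cpow_const_of_real w ?_ (base_mem_slitPlane hy ht.le k)
  exact ((((hasDerivAt_id' (t : ℂ)).const_mul _).const_add _).comp_ofReal).congr_deriv
    (mul_one _)

theorem integrand_update (i : Fin n) (s : ℝ) :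
    integrand α γ (update y (1, i) s) t = (t : ℂ) ^ γ *
      (((y (0, i) : ℂ) + s * t) ^ α i * ∏ k ∈ Finset.univ.erase i, base y k t ^ α k) := by
  rw [integrand, ← Finset.mul_prod_erase _ _ (Finset.mem_univ i)]
  congr 2
  · simp [base]
  · refine Finset.prod_congr rfl fun k hk => ?_
    simp [base, Finset.ne_of_mem_erase hk]

theorem hasDerivAt_integrand_update (hy : ∀ p, 0 < y p) (ht : 0 < t) (i : Fin n) :
    HasDerivAt (fun s => integrand α γ (update y (1, i) s) t) (integrandPartialDeriv α γ y i t)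
      (y (1, i)) := by
  simp only [integrand_update]
  have hbase : HasDerivAt (fun s : ℝ => (y (0, i) : ℂ) + s * t) t (y (1, i)) :=
    ((((hasDerivAt_id' ((y (1, i) : ℝ) : ℂ)).mul_const _).const_add _).comp_ofReal).congr_deriv
      (one_mul _)
  exact ((hbase.cpow_const_of_real (α i) (base_mem_slitPlane hy ht.le i)).mul_const _).const_mul _

theorem hasDerivAt_update {a b : ℝ} {x : (Fin 2 × Fin n) → ℝ} (hx : ∀ p, 0 < x p)
    (ha : 0 < a) (hb : 0 < b) (i : Fin n) :
    HasDerivAt (fun s => Phi α γ a b (update x (1, i) s))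
      (∫ t in a..b, integrandPartialDeriv α γ x i t) (x (1, i)) := by
  have hpos : ∀ s ∈ Ioi (0 : ℝ), ∀ p, 0 < update x (1, i) s p := fun s hs =>
    (forall_update_iff x fun _ v => 0 < v).2 ⟨hs, fun p _ => hx p⟩
  have ht : ∀ t ∈ uIcc a b, 0 < t := fun t ht => (lt_min ha hb).trans_le ht.1
  have hF' : ContinuousOn (uncurry fun s t => integrandPartialDeriv α γ (update x (1, i) s) i t)
      (Ioi 0 ×ˢ uIcc a b) := by
    rintro ⟨s, t⟩ ⟨hs, hst⟩
    exact ((continuousAt_integrandPartialDeriv (α := α) (γ := γ) (hpos s hs) (ht t hst) i).comp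
      (x := (s, t)) (f := fun q : ℝ × ℝ => (update x (1, i) q.1, q.2))
      ((continuous_const.update (1, i) continuous_fst).prodMk continuous_snd).continuousAt
      ).continuousWithinAt
  have := hasDerivAt_integral_of_continuousOn (Ioi_mem_nhds (hx (1, i)))
    (fun s hs => continuousOn_integrand (hpos s hs) ht) hF'
    (fun s hs t hst => by
      simpa only [update_idem, update_self] using
        hasDerivAt_integrand_update (hpos s hs) (ht t hst) i)
  simp only [update_eq_self] at this
  exact this

theorem hasDerivAt_gfun (hy : ∀ p, 0 < y p) (ht : 0 < t) :
    HasDerivAt (fun u => gfun α γ u y)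
      (∑ i, y (1, i) * integrandPartialDeriv α γ y i t + (γ + 1) * integrand α γ y t) t := by
  have hpow : HasDerivAt (fun u : ℝ => (u : ℂ) ^ (γ + 1)) ((γ + 1) * (t : ℂ) ^ γ) t :=
    ((hasDerivAt_id' (t : ℂ)).comp_ofReal.cpow_const_of_real (γ + 1)
      (ofReal_mem_slitPlane.2 ht)).congr_deriv (by rw [add_sub_cancel_right, mul_one])
  refine (hpow.mul (HasDerivAt.fun_finsetProd (u := Finset.univ) fun k _ =>
    hasDerivAt_base_cpow hy ht k (α k))).congr_deriv ?_
  rw [cpow_add _ _ (ofReal_ne_zero.2 ht.ne'), cpow_one, add_comm, Finset.mul_sum, integrand]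
  congr 1
  · refine Finset.sum_congr rfl fun k _ => ?_
    rw [integrandPartialDeriv, smul_eq_mul]
    ring
  · ring

end Phi

open Phi in
theorem stmt5_general {n : ℕ} (α : Fin n → ℂ) (γ : ℂ) (a b : ℝ)
    (ha : 0 < a) (hab : a < b)
    (x : (Fin 2 × Fin n) → ℝ) (hx : ∀ p, 0 < x p) :
    ∑ i, (x (1, i) : ℂ) * pd (1, i) (Phi α γ a b) x
      + (γ + 1) * Phi α γ a b x
      = gfun α γ b x - gfun α γ a x := by
  have hpos : ∀ t ∈ uIcc a b, 0 < t := fun t ht => (lt_min ha (ha.trans hab)).trans_le ht.1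
  have hI : IntervalIntegrable (integrand α γ x) MeasureTheory.volume a b :=
    (continuousOn_integrand hx hpos).intervalIntegrable
  have hD i : IntervalIntegrable (integrandPartialDeriv α γ x i) MeasureTheory.volume a b :=
    (continuousOn_integrandPartialDeriv hx hpos i).intervalIntegrable
  have hsum : IntervalIntegrable
      (fun t => ∑ i, (x (1, i) : ℂ) * integrandPartialDeriv α γ x i t) MeasureTheory.volume a b :=
    (continuousOn_finsetSum _ fun i _ =>
      continuousOn_const.mul (continuousOn_integrandPartialDeriv hx hpos i)).intervalIntegrable
  have hpd i : pd (1, i) (Phi α γ a b) x = ∫ t in a..b, integrandPartialDeriv α γ x i t :=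
    (hasDerivAt_update hx ha (ha.trans hab) i).deriv
  calc ∑ i, (x (1, i) : ℂ) * pd (1, i) (Phi α γ a b) x + (γ + 1) * Phi α γ a b x
      = ∫ t in a..b, (∑ i, (x (1, i) : ℂ) * integrandPartialDeriv α γ x i t
          + (γ + 1) * integrand α γ x t) := by
        rw [integral_add hsum (hI.const_mul _),
          integral_finsetSum fun i _ => (hD i).const_mul _]
        simp_rw [hpd, integral_const_mul]
        rfl
    _ = gfun α γ b x - gfun α γ a x :=
        integral_eq_sub_of_hasDerivAt (fun t ht => hasDerivAt_gfun hx (hpos t ht))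
          (hsum.add (hI.const_mul _))

/-- `Φ` satisfies the inhomogeneous equation
`Σᵢ x_{2i}·∂Φ/∂x_{2i} + (γ+1)·Φ = [g(t,x)]_{t=a}^{t=b}`. -/
theorem stmt5 {n : ℕ} (hn : 1 ≤ n) (α : Fin n → ℂ) (γ : ℂ) (a b : ℝ)
    (ha : 0 < a) (hab : a < b) (hγ : 0 < γ.re) (hα : ∀ k, 0 < (α k).re)
    (x : (Fin 2 × Fin n) → ℝ) (hx : ∀ p, 0 < x p) :
    ∑ i, (x (1, i) : ℂ) * pd (1, i) (Phi α γ a b) x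
      + (γ + 1) * Phi α γ a b x
      = gfun α γ b x - gfun α γ a x :=
  stmt5_general α γ a b ha hab x hx
end

section
/- For every z = (z₁,…,zₙ) ∈ ℂⁿ with |z_k| < 1/b for all k, the family of complex numbers m ↦ c_m · ∏_{k=1}^n z_k^{m_k}, indexed by multi-indices m ∈ ℕⁿ, is absolutely summable. -/
/-
The coefficients factor as `c_m = (b^w - a^w)/w · ∏ₖ (-1)^{m_k} (-α_k)_{m_k} / m_k!` with
`w = γ + |m| + 1`, and `(-1)^j (-α)_j / j! = binom(α, j)`. Since `|b^w - a^w| ≤ (b^{Re γ + 1} +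
a^{Re γ + 1}) b^{|m|}` and `1/|w|` is bounded in `|m|` (Lean reads `0⁻¹` as `0`), the family is
dominated by a constant times `∏ₖ |binom(α_k, m_k)| (b |z_k|)^{m_k}`. Each factor is summable
because the binomial series has radius of convergence at least `1`, and a product of summable
nonnegative families is summable over the product index set.
-/

open Complex Function Polynomial

/-- The coefficient
`c_m = (−1)^{|m|} (∏ₖ (−α_k)_{m_k}) (b^{γ+|m|+1} − a^{γ+|m|+1}) / ((γ+|m|+1) ∏ₖ m_k!)`,
where `(z)_j` is the Pochhammer symbol and powers of the positive reals `a, b`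
are principal complex powers. -/
noncomputable def cm {n : ℕ} (α : Fin n → ℂ) (γ : ℂ) (a b : ℝ)
    (m : Fin n → ℕ) : ℂ :=
  (-1 : ℂ) ^ (∑ k, m k) * (∏ k, (ascPochhammer ℂ (m k)).eval (-(α k)))
    * ((b : ℂ) ^ (γ + ((∑ k, m k : ℕ) : ℂ) + 1)
        - (a : ℂ) ^ (γ + ((∑ k, m k : ℕ) : ℂ) + 1))
    / ((γ + ((∑ k, m k : ℕ) : ℂ) + 1) * ∏ k, ((m k).factorial : ℂ))

open Filter
open scoped Nat NNReal

lemma norm_ringChoose (a : ℂ) (m : ℕ) :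
    ‖Ring.choose a m‖ = ‖(ascPochhammer ℂ m).eval (-a)‖ / m ! := by
  rw [Ring.choose_eq_smul, ascPochhammer_eval_neg_eq_descPochhammer,
    descPochhammer_eval_eq_ascPochhammer, descPochhammer_smeval_eq_ascPochhammer,
    ascPochhammer_smeval_cast, ascPochhammer_smeval_eq_eval]
  simp [div_eq_inv_mul]

lemma summable_norm_ringChoose_mul_pow (a : ℂ) {t : ℝ} (ht0 : 0 ≤ t) (ht1 : t < 1) :
    Summable fun m : ℕ => ‖Ring.choose a m‖ * t ^ m := by
  lift t to ℝ≥0 using ht0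
  have h := (binomialSeries ℂ a).summable_norm_mul_pow (r := t)
    (lt_of_lt_of_le (by exact_mod_cast ht1) binomialSeries_radius_ge_one)
  simpa [binomialSeries, FormalMultilinearSeries.ofScalars_norm] using h

lemma summable_fin_prod_of_nonneg {n : ℕ} {β : Fin n → Type*} (g : ∀ k, β k → ℝ)
    (hg : ∀ k, 0 ≤ g k) (hs : ∀ k, Summable (g k)) :
    Summable fun m : (∀ k, β k) => ∏ k, g k (m k) := by
  induction n with
  | zero => exact summable_of_hasFiniteSupport (Set.toFinite _)
  | succ n ih =>
    have hcons := (hs 0).mul_of_nonneg (ih (fun k => g k.succ) (fun k => hg _) (fun k => hs _))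
      (hg 0) (fun _ => Finset.prod_nonneg fun k _ => hg _ _)
    refine ((Fin.consEquiv β).symm.summable_iff.mpr hcons).congr fun m => ?_
    simp [Fin.consEquiv, Fin.prod_univ_succ, Fin.tail]

lemma bddAbove_range_norm_inv_add_natCast_add_one (γ : ℂ) :
    BddAbove (Set.range fun s : ℕ => ‖γ + s + 1‖⁻¹) := by
  have h : Tendsto (fun s : ℕ => γ + s + 1) atTop (Bornology.cobounded ℂ) :=
    (tendsto_add_const_cobounded 1).comp
      ((tendsto_const_add_cobounded γ).comp tendsto_natCast_atTop_cobounded)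
  simpa using (tendsto_inv₀_cobounded.comp h).norm.bddAbove_range

lemma norm_ofReal_cpow_add_natCast_sub_le {a b : ℝ} (ha : 0 < a) (hab : a ≤ b) (w : ℂ)
    (s : ℕ) : ‖(b : ℂ) ^ (w + s) - (a : ℂ) ^ (w + s)‖ ≤ (b ^ w.re + a ^ w.re) * b ^ s := by
  have hb := ha.trans_le hab
  have hre : (w + s).re = w.re + s := by simp
  calc ‖(b : ℂ) ^ (w + s) - (a : ℂ) ^ (w + s)‖
      ≤ ‖(b : ℂ) ^ (w + s)‖ + ‖(a : ℂ) ^ (w + s)‖ := norm_sub_le _ _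
    _ = b ^ w.re * b ^ s + a ^ w.re * a ^ s := by
      rw [norm_cpow_eq_rpow_re_of_pos hb, norm_cpow_eq_rpow_re_of_pos ha, hre,
        Real.rpow_add hb, Real.rpow_add ha, Real.rpow_natCast, Real.rpow_natCast]
    _ ≤ b ^ w.re * b ^ s + a ^ w.re * b ^ s := by gcongr
    _ = (b ^ w.re + a ^ w.re) * b ^ s := by ring

lemma norm_cm_mul_prod_pow {n : ℕ} (α : Fin n → ℂ) (γ : ℂ) (a b : ℝ) (m : Fin n → ℕ)
    (z : Fin n → ℂ) :
    ‖cm α γ a b m * ∏ k, z k ^ m k‖ =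
      ‖(b : ℂ) ^ (γ + ((∑ k, m k : ℕ) : ℂ) + 1) - (a : ℂ) ^ (γ + ((∑ k, m k : ℕ) : ℂ) + 1)‖
        * ‖γ + ((∑ k, m k : ℕ) : ℂ) + 1‖⁻¹ * ∏ k, ‖Ring.choose (α k) (m k)‖ * ‖z k‖ ^ m k := by
  simp only [cm, norm_ringChoose, norm_mul, norm_div, norm_prod, norm_pow, norm_neg, norm_one,
    one_pow, Complex.norm_natCast, Finset.prod_mul_distrib, Finset.prod_div_distrib]
  ring

lemma exists_norm_cm_mul_prod_pow_le {n : ℕ} (α : Fin n → ℂ) (γ : ℂ) {a b : ℝ} (ha : 0 < a)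
    (hab : a ≤ b) : ∃ C, ∀ (m : Fin n → ℕ) (z : Fin n → ℂ),
      ‖cm α γ a b m * ∏ k, z k ^ m k‖ ≤ C * ∏ k, ‖Ring.choose (α k) (m k)‖ * (b * ‖z k‖) ^ m k := by
  have hb := ha.trans_le hab
  obtain ⟨B, hB⟩ := bddAbove_range_norm_inv_add_natCast_add_one γ
  refine ⟨(b ^ (γ + 1).re + a ^ (γ + 1).re) * B, fun m z => ?_⟩
  set s := ∑ k, m k
  have hdiff : ‖(b : ℂ) ^ (γ + s + 1) - (a : ℂ) ^ (γ + s + 1)‖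
      ≤ (b ^ (γ + 1).re + a ^ (γ + 1).re) * b ^ s := by
    simpa only [add_right_comm] using norm_ofReal_cpow_add_natCast_sub_le ha hab (γ + 1) s
  have hinv : ‖γ + s + 1‖⁻¹ ≤ B := hB ⟨s, rfl⟩
  have hprod : ∏ k, ‖Ring.choose (α k) (m k)‖ * (b * ‖z k‖) ^ m k
      = b ^ s * ∏ k, ‖Ring.choose (α k) (m k)‖ * ‖z k‖ ^ m k := by
    simp only [mul_pow, Finset.prod_mul_distrib, Finset.prod_pow_eq_pow_sum]
    ring
  rw [norm_cm_mul_prod_pow, hprod]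
  calc _ ≤ (b ^ (γ + 1).re + a ^ (γ + 1).re) * b ^ s * B
        * ∏ k, ‖Ring.choose (α k) (m k)‖ * ‖z k‖ ^ m k := by gcongr
    _ = _ := by ring

theorem stmt6_general {n : ℕ} (α : Fin n → ℂ) (γ : ℂ) (a b : ℝ)
    (ha : 0 < a) (hab : a < b)
    (z : Fin n → ℂ) (hz : ∀ k, ‖z k‖ < 1 / b) :
    Summable (fun m : Fin n → ℕ => ‖cm α γ a b m * ∏ k, z k ^ m k‖) := by
  have hb : 0 < b := ha.trans hab
  obtain ⟨C, hC⟩ := exists_norm_cm_mul_prod_pow_le α γ ha hab.le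
  have hfactor (k : Fin n) : Summable fun j : ℕ => ‖Ring.choose (α k) j‖ * (b * ‖z k‖) ^ j :=
    summable_norm_ringChoose_mul_pow _ (by positivity) ((lt_div_iff₀' hb).mp (hz k))
  have hprod := summable_fin_prod_of_nonneg _ (fun k j => by positivity) hfactor
  exact (hprod.mul_left C).of_nonneg_of_le (fun _ => norm_nonneg _) fun m => hC m z

/-- for `|z_k| < 1/b` the family `m ↦ c_m ∏ₖ z_k^{m_k}` is
absolutely summable. -/
theorem stmt6 {n : ℕ} (hn : 1 ≤ n) (α : Fin n → ℂ) (γ : ℂ) (a b : ℝ)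
    (ha : 0 < a) (hab : a < b) (hγ : ∀ j : ℕ, γ ≠ -((j : ℂ) + 1))
    (z : Fin n → ℂ) (hz : ∀ k, ‖z k‖ < 1 / b) :
    Summable (fun m : Fin n → ℕ => ‖cm α γ a b m * ∏ k, z k ^ m k‖) :=
  stmt6_general α γ a b ha hab z hz
end
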